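/- Let N be a normal subgroup of UT_n(F_q) and let λ be the set of minimal elements of supp(N) (the set of positions (i,j), i<j, where some element of N has a nonzero entry). Then the double commutator subgroup [UT_n(F_q), [UT_n(F_q), N]] equals UT_{↑²λ} = 1 + ut_{↑²λ}, the group of unipotent matrices whose strictly-upper-triangular part is supported on ↑²λ. -/

import Mathlib

open Matrix BigOperators

namespace Paper

variable (n : ℕ) (F : Type*) [Field F]

/-- The strictly upper triangular matrices `ut_n(F)`. -/
def utset : Set (Matrix (Fin n) (Fin n) F) :=
  {a | ∀ i j : Fin n, ¬ i < j → a i j = 0}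

/-- The unipotent upper triangular group `UT_n(F)` (as a set of matrices). -/
def UTset : Set (Matrix (Fin n) (Fin n) F) :=
  {g | (∀ i j : Fin n, j < i → g i j = 0) ∧ ∀ i : Fin n, g i i = 1}

/-- `N` is a normal subgroup of the group `UT_n(F)`. -/
def IsNormalSubgroupUT (N : Set (Matrix (Fin n) (Fin n) F)) : Prop :=
  N ⊆ UTset n F ∧ (1 : Matrix (Fin n) (Fin n) F) ∈ N ∧
    (∀ a ∈ N, ∀ b ∈ N, a * b ∈ N) ∧
    (∀ a ∈ N, ∃ b ∈ N, a * b = 1 ∧ b * a = 1) ∧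
    (∀ g ∈ UTset n F, ∀ g' : Matrix (Fin n) (Fin n) F, g * g' = 1 → g' * g = 1 →
      ∀ a ∈ N, g * a * g' ∈ N)

/-- The order `(i,j) ⪯ (r,s)` iff `r ≤ i` and `j ≤ s` on edges. -/
def edgeLe (p q : Fin n × Fin n) : Prop := q.1 ≤ p.1 ∧ p.2 ≤ q.2

/-- A set of increasing edges (a subset of `[[n]]`). -/
def IsEdgeSet (s : Set (Fin n × Fin n)) : Prop := ∀ p ∈ s, p.1 < p.2

/-- The upper set of `[[n]]` generated by `lam`. -/
def upGen (lam : Set (Fin n × Fin n)) : Set (Fin n × Fin n) :=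
  {q | q.1 < q.2 ∧ ∃ p ∈ lam, edgeLe n p q}

/-- `↑^ℓ lam`: elements at least `ℓ` in height above some element of `lam`. -/
def upNum (lam : Set (Fin n × Fin n)) (l : ℕ) : Set (Fin n × Fin n) :=
  {q | q.1 < q.2 ∧ ∃ p ∈ lam, edgeLe n p q ∧ ((p.2 : ℕ) - (p.1 : ℕ)) + l ≤ (q.2 : ℕ) - (q.1 : ℕ)}

/-- An upper set in the poset `[[n]]`. -/
def IsUpperSetE (s : Set (Fin n × Fin n)) : Prop :=
  IsEdgeSet n s ∧ ∀ p ∈ s, ∀ q : Fin n × Fin n, q.1 < q.2 → edgeLe n p q → q ∈ s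

/-- An antichain in the poset `[[n]]`. -/
def IsAntichainE (s : Set (Fin n × Fin n)) : Prop :=
  IsEdgeSet n s ∧ ∀ p ∈ s, ∀ q ∈ s, edgeLe n p q → p = q

/-- The set of minimal elements of `s`. -/
def minimalsE (s : Set (Fin n × Fin n)) : Set (Fin n × Fin n) :=
  {p | p ∈ s ∧ ∀ q ∈ s, edgeLe n q p → q = p}

/-- A set partition of `[n]`: an antichain in both endpoint orders. -/
def IsSetPartitionE (s : Set (Fin n × Fin n)) : Prop :=
  IsEdgeSet n s ∧ (∀ p ∈ s, ∀ q ∈ s, p.1 = q.1 → p = q) ∧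
    (∀ p ∈ s, ∀ q ∈ s, p.2 = q.2 → p = q)

/-- A nonnesting set partition of `[n]`. -/
def IsNNSP (s : Set (Fin n × Fin n)) : Prop :=
  IsSetPartitionE n s ∧ ∀ p ∈ s, ∀ q ∈ s, edgeLe n p q → p = q

/-- `nu` gives a splice `S = lam ⊔ nu` of the set partition `lam`. -/
def IsSplice (lam nu : Set (Fin n × Fin n)) : Prop :=
  IsSetPartitionE n lam ∧ IsSetPartitionE n nu ∧ Disjoint lam nu ∧
  (∀ p ∈ nu, ∃ j : Fin n, p.1 < j ∧ j < p.2 ∧ ((p.1, j) ∈ lam ∨ (j, p.2) ∈ lam)) ∧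
  (∀ j k : Fin n, j < k →
    ((∃ i, (i, k) ∈ nu ∧ (i, j) ∈ lam) ↔ (∃ l, (k, l) ∈ lam ∧ (j, l) ∈ nu)))

/-- A tight splice: `S ∩ ↑²lam = ∅`. -/
def IsTightSplice (lam nu : Set (Fin n × Fin n)) : Prop :=
  IsSplice n lam nu ∧ (lam ∪ nu) ∩ upNum n lam 2 = ∅

/-- A binding `(i,j,k,l)` of the splice `lam ⊔ nu`. -/
def IsBinding (lam nu : Set (Fin n × Fin n)) (b : Fin n × Fin n × Fin n × Fin n) : Prop :=
  (b.1, b.2.1) ∈ lam ∧ (b.2.2.1, b.2.2.2) ∈ lam ∧ (b.1, b.2.2.1) ∈ nu ∧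
    (b.2.1, b.2.2.2) ∈ nu ∧ b.2.1 < b.2.2.1

/-- Base relation generating the row equivalence on `nu`. -/
def rowRel (lam nu : Set (Fin n × Fin n)) (p q : Fin n × Fin n) : Prop :=
  ∃ b, IsBinding n lam nu b ∧
    ((p = (b.1, b.2.2.1) ∧ q = (b.2.1, b.2.2.2)) ∨ (q = (b.1, b.2.2.1) ∧ p = (b.2.1, b.2.2.2)))

/-- Base relation generating the column equivalence on `lam`. -/
def colRel (lam nu : Set (Fin n × Fin n)) (p q : Fin n × Fin n) : Prop :=
  ∃ b, IsBinding n lam nu b ∧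
    ((p = (b.1, b.2.1) ∧ q = (b.2.2.1, b.2.2.2)) ∨ (q = (b.1, b.2.1) ∧ p = (b.2.2.1, b.2.2.2)))

/-- The rows of the splice `lam ⊔ nu`. -/
def rowsOf (lam nu : Set (Fin n × Fin n)) : Set (Set (Fin n × Fin n)) :=
  {R | ∃ p ∈ nu, R = {q | q ∈ nu ∧ Relation.ReflTransGen (rowRel n lam nu) p q}}

/-- The columns of the splice `lam ⊔ nu`. -/
def colsOf (lam nu : Set (Fin n × Fin n)) : Set (Set (Fin n × Fin n)) :=
  {C | ∃ p ∈ lam, C = {q | q ∈ lam ∧ Relation.ReflTransGen (colRel n lam nu) p q}}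

/-- The set of bindings of the splice `lam ⊔ nu`. -/
def bindSet (lam nu : Set (Fin n × Fin n)) : Set (Fin n × Fin n × Fin n × Fin n) :=
  {b | IsBinding n lam nu b}

/-- Connectivity in the graph of `lam` on vertex set `[n]`. -/
def conn (lam : Set (Fin n × Fin n)) : Fin n → Fin n → Prop :=
  Relation.ReflTransGen (fun x y => (x, y) ∈ lam ∨ (y, x) ∈ lam)

/-- `ut_F`: span of the matrix units indexed by `s`. -/
def utOf (s : Set (Fin n × Fin n)) : Submodule F (Matrix (Fin n) (Fin n) F) :=
  Submodule.span F {m | ∃ p ∈ s, m = Matrix.single p.1 p.2 (1 : F)}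

/-- The support of a set of matrices. -/
def suppOf (N : Set (Matrix (Fin n) (Fin n) F)) : Set (Fin n × Fin n) :=
  {p | p.1 < p.2 ∧ ∃ a ∈ N, a p.1 p.2 ≠ 0}

/-- `[X, Y]`: the span of all brackets `a*b - b*a`, `a ∈ X`, `b ∈ Y`. -/
def brSpan (X Y : Set (Matrix (Fin n) (Fin n) F)) : Submodule F (Matrix (Fin n) (Fin n) F) :=
  Submodule.span F {z | ∃ a ∈ X, ∃ b ∈ Y, z = a * b - b * a}


/-- A subset of a monoid which is a subgroup. -/
def IsSubgroupSet {M : Type*} [Monoid M] (S : Set M) : Prop :=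
  (1 : M) ∈ S ∧ (∀ a ∈ S, ∀ b ∈ S, a * b ∈ S) ∧ ∀ a ∈ S, ∃ b ∈ S, a * b = 1 ∧ b * a = 1

/-- The set of group commutators `[g, h] = g⁻¹ h⁻¹ g h` with `g ∈ G`, `h ∈ H`. -/
def commSet {M : Type*} [Monoid M] (G H : Set M) : Set M :=
  {z | ∃ g ∈ G, ∃ h ∈ H, ∃ g' h' : M,
    g * g' = 1 ∧ g' * g = 1 ∧ h * h' = 1 ∧ h' * h = 1 ∧ z = g' * h' * g * h}

/-- The commutator subgroup `[G, H]`: the smallest subgroup containing all commutators. -/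
def commClosure {M : Type*} [Monoid M] (G H : Set M) : Set M :=
  ⋂₀ {S | IsSubgroupSet S ∧ commSet G H ⊆ S}


/-!
Write `λ` for the minimal elements of `supp N` and `UT_S = 1 + ut_S` for pattern groups.

Upper bound: `N ⊆ UT_{↑⁰λ}`, and as `g⁻¹h⁻¹gh - 1 = g⁻¹h⁻¹((g-1)(h-1) - (h-1)(g-1))`, commutators
of `UT_n` with `UT_{↑ᵏλ}` lie in `UT_{↑ᵏ⁺¹λ}`.

Lower bound: let `(r,s) ∈ ↑²λ` lie above `(i,j) ∈ λ`, and `a ∈ N` with `a_ij ≠ 0`. A double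
commutator `[1 + u e_{p'q'}, [1 + e_{pq}, a^{±1}]]` with suitable elementary matrices is `1 + w`,
where `w` is a single row or column of a conjugate of `a - 1`, `w_rs` is any prescribed `t`, and
`w` is supported on positions weakly above `(r,s)`: minimality of `(i,j)` in `supp N` kills the
other entries. The three placements of `(r,s)` relative to `(i,j)` need separate choices. Dividing
such elements off one position at a time, in a linear order refining the poset, exhausts
`UT_{↑²λ}`.
-/
section CommClosure

variable {M : Type*} [Monoid M] {G H : Set M}

theorem commClosure_subset {S : Set M} (hS : IsSubgroupSet S) (hGH : commSet G H ⊆ S) :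
    commClosure G H ⊆ S :=
  fun _ hx => hx S ⟨hS, hGH⟩

theorem commSet_subset_commClosure : commSet G H ⊆ commClosure G H :=
  fun _ hx _ hS => hS.2 hx

theorem commSet_mono_right {H' : Set M} (h : H ⊆ H') : commSet G H ⊆ commSet G H' := by
  rintro z ⟨g, hg, k, hk, rest⟩
  exact ⟨g, hg, k, h hk, rest⟩

theorem one_mem_commClosure : (1 : M) ∈ commClosure G H :=
  fun _ hS => hS.1.1

theorem mul_mem_commClosure {x y : M} (hx : x ∈ commClosure G H) (hy : y ∈ commClosure G H) :
    x * y ∈ commClosure G H :=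
  fun S hS => hS.1.2.1 x (hx S hS) y (hy S hS)

theorem commSet_commSet_subset_commClosure :
    commSet G (commSet G H) ⊆ commClosure G (commClosure G H) :=
  (commSet_mono_right commSet_subset_commClosure).trans commSet_subset_commClosure

end CommClosure

variable {n F}

def edges (n : ℕ) : Set (Fin n × Fin n) := {p | p.1 < p.2}

def patternGroup (S : Set (Fin n × Fin n)) : Set (Matrix (Fin n) (Fin n) F) :=
  (fun a => 1 + a) '' (utOf n F S : Set (Matrix (Fin n) (Fin n) F))

def IsClosedPattern (S : Set (Fin n × Fin n)) : Prop :=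
  IsEdgeSet n S ∧ ∀ i k j : Fin n, (i, k) ∈ S → (k, j) ∈ S → (i, j) ∈ S

section Pattern

variable {S T U : Set (Fin n × Fin n)} {x y : Matrix (Fin n) (Fin n) F}

theorem single_mem_utOf {i j : Fin n} (h : (i, j) ∈ S) (t : F) : single i j t ∈ utOf n F S := by
  rw [← mul_one t, ← smul_eq_mul, ← smul_single]
  exact Submodule.smul_mem _ _ (Submodule.subset_span ⟨(i, j), h, rfl⟩)

theorem mem_utOf_iff : x ∈ utOf n F S ↔ ∀ i j : Fin n, (i, j) ∉ S → x i j = 0 := by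
  constructor
  · intro hx
    induction hx using Submodule.span_induction with
    | mem x h =>
      obtain ⟨p, hp, rfl⟩ := h
      intro i j hij
      exact single_apply_of_ne _ _ _ _ _ fun h => hij (by rwa [← h.1, ← h.2])
    | zero => intro _ _ _; rfl
    | add x y _ _ hx hy => intro i j h; simp [hx i j h, hy i j h]
    | smul c x _ hx => intro i j h; simp [hx i j h]
  · intro hx
    rw [matrix_eq_sum_single x]
    refine Submodule.sum_mem _ fun i _ => Submodule.sum_mem _ fun j _ => ?_
    by_cases h : (i, j) ∈ S
    · exact single_mem_utOf h _
    · rw [hx i j h, single_zero]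
      exact Submodule.zero_mem _

theorem utOf_mono (h : S ⊆ T) : utOf n F S ≤ utOf n F T :=
  Submodule.span_mono fun _ ⟨p, hp, e⟩ => ⟨p, h hp, e⟩

theorem utOf_empty_eq_bot : utOf n F (∅ : Set (Fin n × Fin n)) = ⊥ := by
  simp [utOf]

theorem mul_mem_utOf (hST : ∀ i k j : Fin n, (i, k) ∈ S → (k, j) ∈ T → (i, j) ∈ U)
    (hx : x ∈ utOf n F S) (hy : y ∈ utOf n F T) : x * y ∈ utOf n F U := by
  rw [mem_utOf_iff] at *
  intro i j hij
  refine (mul_apply ..).trans (Finset.sum_eq_zero fun k _ => ?_)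
  by_cases hik : (i, k) ∈ S
  · by_cases hkj : (k, j) ∈ T
    · exact absurd (hST i k j hik hkj) hij
    · rw [hy k j hkj, mul_zero]
  · rw [hx i k hik, zero_mul]

theorem sub_smul_single_mem_utOf_diff (hx : x ∈ utOf n F S) (p : Fin n × Fin n) :
    x - x p.1 p.2 • single p.1 p.2 1 ∈ utOf n F (S \ {p}) := by
  rw [mem_utOf_iff] at *
  intro i j hij
  by_cases hp : (i, j) = p
  · subst hp; simp
  · have : (i, j) ∉ S := fun h => hij ⟨h, hp⟩
    have hne : ¬(p.1 = i ∧ p.2 = j) := fun h => hp (by rw [← h.1, ← h.2])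
    simp [hx i j this, single_apply_of_ne _ _ _ _ _ hne]

theorem mem_patternGroup_iff {g : Matrix (Fin n) (Fin n) F} :
    g ∈ patternGroup S ↔ g - 1 ∈ utOf n F S :=
  ⟨by rintro ⟨x, hx, rfl⟩; simpa using hx, fun h => ⟨g - 1, h, add_sub_cancel 1 g⟩⟩

theorem patternGroup_mono (h : S ⊆ T) :
    patternGroup S ⊆ (patternGroup T : Set (Matrix (Fin n) (Fin n) F)) :=
  Set.image_mono (utOf_mono h)

theorem UTset_eq_patternGroup_edges : UTset n F = patternGroup (edges n) := by
  ext g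
  rw [mem_patternGroup_iff, mem_utOf_iff]
  constructor
  · rintro ⟨hlow, hdiag⟩ i j hij
    rcases lt_trichotomy i j with h | rfl | h
    · exact absurd h hij
    · simp [hdiag]
    · simp [hlow i j h, h.ne']
  · intro h
    refine ⟨fun i j hji => ?_, fun i => ?_⟩
    · simpa [hji.ne'] using h i j (not_lt.2 hji.le)
    · simpa [sub_eq_zero] using h i i (lt_irrefl i)

theorem pow_mem_utOf_edges (hx : x ∈ utOf n F (edges n)) (k : ℕ) :
    x ^ k ∈ utOf n F {p : Fin n × Fin n | (p.1 : ℕ) + k ≤ p.2} := by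
  induction k with
  | zero =>
    rw [pow_zero, mem_utOf_iff]
    intro i j hij
    simp only [Set.mem_ofPred_eq, add_zero, not_le] at hij
    simp [one_apply, Fin.ext_iff, hij.ne']
  | succ k ih =>
    rw [pow_succ]
    refine mul_mem_utOf (fun i m j him hmj => ?_) ih hx
    simp only [edges, Set.mem_ofPred_eq, Fin.lt_def] at *
    omega

theorem pow_eq_zero_of_mem_utOf_edges (hx : x ∈ utOf n F (edges n)) : x ^ n = 0 := by
  have h := pow_mem_utOf_edges hx n
  rwa [show {p : Fin n × Fin n | (p.1 : ℕ) + n ≤ p.2} = ∅ by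
      ext p; simp only [Set.mem_ofPred_eq, Set.mem_empty_iff_false, iff_false, not_le]; omega,
    utOf_empty_eq_bot, Submodule.mem_bot] at h

theorem IsClosedPattern.pow_succ_mem (hS : IsClosedPattern S) (hx : x ∈ utOf n F S) (k : ℕ) :
    x ^ (k + 1) ∈ utOf n F S := by
  induction k with
  | zero => simpa using hx
  | succ k ih => rw [pow_succ]; exact mul_mem_utOf hS.2 ih hx

theorem IsClosedPattern.exists_inverse (hS : IsClosedPattern S) (hx : x ∈ utOf n F S) :
    ∃ y ∈ utOf n F S, (1 + x) * (1 + y) = 1 ∧ (1 + y) * (1 + x) = 1 := by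
  have hnil : (-x) ^ (n + 1) = 0 := by
    rw [pow_succ, neg_pow, pow_eq_zero_of_mem_utOf_edges (utOf_mono hS.1 hx)]; simp
  have hsum : 1 + ∑ k ∈ Finset.range n, (-x) ^ (k + 1) =
      ∑ k ∈ Finset.range (n + 1), (-x) ^ k := by
    rw [Finset.sum_range_succ', pow_zero, add_comm]
  refine ⟨∑ k ∈ Finset.range n, (-x) ^ (k + 1),
    Submodule.sum_mem _ fun k _ => hS.pow_succ_mem (Submodule.neg_mem _ hx) k, ?_, ?_⟩
  · simpa [hsum, hnil] using mul_neg_geom_sum (-x) (n + 1)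
  · simpa [hsum, hnil] using geom_sum_mul_neg (-x) (n + 1)

theorem IsClosedPattern.isSubgroupSet (hS : IsClosedPattern S) :
    IsSubgroupSet (patternGroup S : Set (Matrix (Fin n) (Fin n) F)) := by
  refine ⟨⟨0, Submodule.zero_mem _, add_zero 1⟩, ?_, ?_⟩
  · rintro _ ⟨x, hx, rfl⟩ _ ⟨y, hy, rfl⟩
    refine ⟨x + y + x * y, ?_, by noncomm_ring⟩
    exact add_mem (add_mem hx hy) (mul_mem_utOf hS.2 hx hy)
  · rintro _ ⟨x, hx, rfl⟩
    obtain ⟨y, hy, h1, h2⟩ := hS.exists_inverse hx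
    exact ⟨1 + y, ⟨y, hy, rfl⟩, h1, h2⟩

theorem IsClosedPattern.mem_patternGroup_of_mul_eq_one (hS : IsClosedPattern S)
    {g g' : Matrix (Fin n) (Fin n) F} (hg : g ∈ patternGroup S) (hg' : g' * g = 1) :
    g' ∈ patternGroup S := by
  obtain ⟨b, hb, hgb, -⟩ := hS.isSubgroupSet.2.2 g hg
  rwa [left_inv_eq_right_inv hg' hgb]

theorem isClosedPattern_edges : IsClosedPattern (edges n) :=
  ⟨fun _ h => h, fun i _ j h1 h2 => (lt_trans h1 h2 : i < j)⟩

theorem mem_UTset_of_mul_eq_one {g g' : Matrix (Fin n) (Fin n) F} (hg : g ∈ UTset n F)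
    (hg' : g' * g = 1) : g' ∈ UTset n F := by
  rw [UTset_eq_patternGroup_edges] at *
  exact isClosedPattern_edges.mem_patternGroup_of_mul_eq_one hg hg'

end Pattern

section Heights

variable {lam : Set (Fin n × Fin n)} {k : ℕ}

theorem mem_upNum_of_edgeLe {l : ℕ} {p q : Fin n × Fin n} (hp : p ∈ upNum n lam k)
    (hpq : edgeLe n p q) (hl : l + ((p.2 : ℕ) - p.1) ≤ k + ((q.2 : ℕ) - q.1)) :
    q ∈ upNum n lam l := by
  obtain ⟨hp12, r, hr, ⟨hr1, hr2⟩, hh⟩ := hp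
  obtain ⟨hq1, hq2⟩ := hpq
  refine ⟨?_, r, hr, ⟨hq1.trans hr1, hr2.trans hq2⟩, ?_⟩ <;>
  · simp only [Fin.lt_def, Fin.le_def] at *
    omega

theorem upNum_subset_edges : upNum n lam k ⊆ edges n := fun _ h => h.1

theorem upNum_succ_subset : upNum n lam (k + 1) ⊆ upNum n lam k :=
  fun _ hp => mem_upNum_of_edgeLe hp ⟨le_rfl, le_rfl⟩ (by omega)

theorem isUpperSetE_upNum : IsUpperSetE n (upNum n lam k) := by
  refine ⟨fun _ h => h.1, fun p hp q _ hpq => mem_upNum_of_edgeLe hp hpq ?_⟩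
  have := hp.1
  simp only [edgeLe, Fin.lt_def, Fin.le_def] at *
  omega

theorem mem_upNum_succ_of_mem_edges_left {i m j : Fin n} (him : (i, m) ∈ edges n)
    (hmj : (m, j) ∈ upNum n lam k) : (i, j) ∈ upNum n lam (k + 1) := by
  refine mem_upNum_of_edgeLe hmj ⟨him.le, le_rfl⟩ ?_
  have := hmj.1
  simp only [edges, Set.mem_ofPred_eq, Fin.lt_def] at *
  omega

theorem mem_upNum_succ_of_mem_edges_right {i m j : Fin n} (him : (i, m) ∈ upNum n lam k)
    (hmj : (m, j) ∈ edges n) : (i, j) ∈ upNum n lam (k + 1) := by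
  refine mem_upNum_of_edgeLe him ⟨le_rfl, hmj.le⟩ ?_
  have := him.1
  simp only [edges, Set.mem_ofPred_eq, Fin.lt_def] at *
  omega

theorem isClosedPattern_upNum : IsClosedPattern (upNum n lam k) :=
  ⟨fun _ h => h.1, fun _ _ _ h1 h2 =>
    upNum_succ_subset (mem_upNum_succ_of_mem_edges_right h1 (upNum_subset_edges h2))⟩

theorem mul_mem_utOf_upNum {g x : Matrix (Fin n) (Fin n) F} (hg : g ∈ UTset n F)
    (hx : x ∈ utOf n F (upNum n lam k)) : g * x ∈ utOf n F (upNum n lam k) := by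
  rw [UTset_eq_patternGroup_edges, mem_patternGroup_iff] at hg
  rw [show g * x = x + (g - 1) * x by noncomm_ring]
  refine add_mem hx (utOf_mono upNum_succ_subset ?_)
  exact mul_mem_utOf (fun _ _ _ => mem_upNum_succ_of_mem_edges_left) hg hx

theorem commutator_mem_patternGroup_upNum_succ {g g' h h' : Matrix (Fin n) (Fin n) F}
    (hg : g ∈ UTset n F) (hg'g : g' * g = 1) (hh : h ∈ patternGroup (upNum n lam k))
    (hh'h : h' * h = 1) : g' * h' * g * h ∈ patternGroup (upNum n lam (k + 1)) := by
  have hhUT : h ∈ UTset n F := by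
    rw [UTset_eq_patternGroup_edges]; exact patternGroup_mono upNum_subset_edges hh
  have hg' := mem_UTset_of_mul_eq_one hg hg'g
  have hh' := mem_UTset_of_mul_eq_one hhUT hh'h
  rw [UTset_eq_patternGroup_edges, mem_patternGroup_iff] at hg
  rw [mem_patternGroup_iff] at hh ⊢
  have hgh : g * h - h * g ∈ utOf n F (upNum n lam (k + 1)) := by
    rw [show g * h - h * g = (g - 1) * (h - 1) - (h - 1) * (g - 1) by noncomm_ring]
    exact sub_mem (mul_mem_utOf (fun _ _ _ => mem_upNum_succ_of_mem_edges_left) hg hh)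
      (mul_mem_utOf (fun _ _ _ => mem_upNum_succ_of_mem_edges_right) hh hg)
  have e : g' * h' * g * h - 1 = g' * (h' * (g * h - h * g)) := by
    calc g' * h' * g * h - 1 = g' * h' * g * h - g' * (h' * h) * g := by
          rw [hh'h, mul_one, hg'g]
      _ = g' * (h' * (g * h - h * g)) := by noncomm_ring
  rw [e]
  exact mul_mem_utOf_upNum hg' (mul_mem_utOf_upNum hh' hgh)

theorem commClosure_subset_patternGroup_upNum_succ {H : Set (Matrix (Fin n) (Fin n) F)}
    (hH : H ⊆ patternGroup (upNum n lam k)) :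
    commClosure (UTset n F) H ⊆ patternGroup (upNum n lam (k + 1)) := by
  refine commClosure_subset isClosedPattern_upNum.isSubgroupSet ?_
  rintro _ ⟨g, hg, h, hh, g', h', -, hg'g, -, hh'h, rfl⟩
  exact commutator_mem_patternGroup_upNum_succ hg hg'g (hH hh) hh'h

end Heights

section Support

theorem exists_mem_minimalsE_edgeLe {S : Set (Fin n × Fin n)} (hS : IsEdgeSet n S)
    {p : Fin n × Fin n} (hp : p ∈ S) : ∃ q ∈ minimalsE n S, edgeLe n q p := by
  obtain ⟨q, ⟨hqS, hqp⟩, hmin⟩ := Set.exists_min_image {q | q ∈ S ∧ edgeLe n q p}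
    (fun q => (q.2 : ℕ) - q.1) (Set.toFinite _) ⟨p, hp, le_rfl, le_rfl⟩
  refine ⟨q, ⟨hqS, fun q' hq' hq'q => ?_⟩, hqp⟩
  have hh := hmin q' ⟨hq', hqp.1.trans hq'q.1, hq'q.2.trans hqp.2⟩
  have := hS q' hq'
  obtain ⟨h1, h2⟩ := hq'q
  simp only [Fin.lt_def, Fin.le_def] at *
  ext <;> omega

theorem subset_upNum_minimalsE_zero {S : Set (Fin n × Fin n)} (hS : IsEdgeSet n S) :
    S ⊆ upNum n (minimalsE n S) 0 := by
  intro p hp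
  obtain ⟨q, hq, hqp⟩ := exists_mem_minimalsE_edgeLe hS hp
  refine ⟨hS p hp, q, hq, hqp, ?_⟩
  obtain ⟨h1, h2⟩ := hqp
  simp only [Fin.le_def] at *
  omega

variable {N : Set (Matrix (Fin n) (Fin n) F)}

theorem subset_patternGroup_suppOf (hN : N ⊆ UTset n F) : N ⊆ patternGroup (suppOf n F N) := by
  intro a ha
  have h := hN ha
  rw [UTset_eq_patternGroup_edges, mem_patternGroup_iff, mem_utOf_iff] at h
  rw [mem_patternGroup_iff, mem_utOf_iff]
  intro i j hij
  by_cases hlt : i < j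
  · by_contra hne
    exact hij ⟨hlt, a, ha, by simpa [hlt.ne] using hne⟩
  · exact h i j hlt

theorem subset_patternGroup_upNum_zero (hN : N ⊆ UTset n F) :
    N ⊆ patternGroup (upNum n (minimalsE n (suppOf n F N)) 0) :=
  (subset_patternGroup_suppOf hN).trans
    (patternGroup_mono (subset_upNum_minimalsE_zero fun _ h => h.1))

theorem sub_one_apply_eq_zero_of_mem_minimalsE (hN : N ⊆ UTset n F) {a : Matrix (Fin n) (Fin n) F}
    (ha : a ∈ N) {i j x y : Fin n} (hij : (i, j) ∈ minimalsE n (suppOf n F N))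
    (hxy : edgeLe n (x, y) (i, j)) (hne : (x, y) ≠ (i, j)) : (a - 1) x y = 0 := by
  have h := mem_patternGroup_iff.1 (subset_patternGroup_suppOf hN ha)
  exact mem_utOf_iff.1 h x y fun hs => hne (hij.2 (x, y) hs hxy)

end Support

-- Rows increasing, columns decreasing: positions higher in `edgeLe` come first.
def linearIndex (q : Fin n × Fin n) : ℕ := finProdFinEquiv (q.1, q.2.rev)

theorem linearIndex_lt (q : Fin n × Fin n) : linearIndex q < n * n :=
  (finProdFinEquiv (q.1, q.2.rev)).isLt

theorem linearIndex_injective : Function.Injective (linearIndex (n := n)) := by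
  intro p q h
  have := finProdFinEquiv.injective (Fin.ext h)
  simp only [Prod.mk.injEq, Fin.rev_inj] at this
  exact Prod.ext this.1 this.2

theorem linearIndex_lt_of_edgeLe {p q : Fin n × Fin n} (hpq : edgeLe n p q) (hne : q ≠ p) :
    linearIndex q < linearIndex p := by
  simp only [linearIndex, finProdFinEquiv_apply_val]
  rcases hpq.1.lt_or_eq with h | h
  · have h1 := Nat.mul_le_mul_left n (Fin.lt_def.1 h)
    have h2 := q.2.rev.isLt
    rw [Nat.mul_succ] at h1
    omega
  · have h2 : p.2 < q.2 := lt_of_le_of_ne hpq.2 fun e => hne (Prod.ext h e.symm)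
    have h3 := Fin.lt_def.1 (Fin.rev_lt_rev.2 h2)
    rw [h]
    omega

def ContainsRootAt (D : Set (Matrix (Fin n) (Fin n) F)) (p : Fin n × Fin n) : Prop :=
  ∀ t : F, ∃ w ∈ utOf n F {q | edgeLe n p q}, w p.1 p.2 = t ∧ 1 + w ∈ D

theorem ContainsRootAt.mono {D D' : Set (Matrix (Fin n) (Fin n) F)} {p : Fin n × Fin n}
    (h : ContainsRootAt D p) (hD : D ⊆ D') : ContainsRootAt D' p := fun t => by
  obtain ⟨w, hw, hwp, hwD⟩ := h t
  exact ⟨w, hw, hwp, hD hwD⟩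

section Elimination

variable {S : Set (Fin n × Fin n)}

theorem exists_one_add_eq_one_add_mul_one_add (hS : IsUpperSetE n S) {p : Fin n × Fin n}
    (hp : p ∈ S) {v w : Matrix (Fin n) (Fin n) F}
    (hv : v ∈ utOf n F (S ∩ {q | linearIndex q ≤ linearIndex p}))
    (hw : w ∈ utOf n F {q | edgeLe n p q}) (hwp : w p.1 p.2 = v p.1 p.2) :
    ∃ v' ∈ utOf n F (S ∩ {q | linearIndex q < linearIndex p}),
      1 + v = (1 + w) * (1 + v') := by
  have hp12 : p.1 < p.2 := hS.1 p hp
  have hww : w * w = 0 := by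
    have := mul_mem_utOf (U := ∅)
      (fun i k j (hik : edgeLe n p (i, k)) (hkj : edgeLe n p (k, j)) =>
        absurd (hp12.trans_le hik.2) (not_lt.2 hkj.1)) hw hw
    rwa [utOf_empty_eq_bot, Submodule.mem_bot] at this
  have hcone : {q | edgeLe n p q} \ {p} ⊆ S ∩ {q | linearIndex q < linearIndex p} :=
    fun q ⟨hq, hne⟩ => ⟨hS.2 p hp q ((hq.1.trans_lt hp12).trans_le hq.2) hq,
      linearIndex_lt_of_edgeLe hq hne⟩
  have hrest : (S ∩ {q | linearIndex q ≤ linearIndex p}) \ {p} ⊆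
      S ∩ {q | linearIndex q < linearIndex p} :=
    fun q ⟨⟨hq, hle⟩, hne⟩ =>
      ⟨hq, lt_of_le_of_ne hle fun e => hne (linearIndex_injective e)⟩
  have hwv : ∀ i k j : Fin n, (i, k) ∈ {q | edgeLe n p q} →
      (k, j) ∈ S ∩ {q | linearIndex q ≤ linearIndex p} →
      (i, j) ∈ S ∩ {q | linearIndex q < linearIndex p} := by
    rintro i k j ⟨hi, hk⟩ ⟨hkj, hle⟩
    have hik : i < k := (hi.trans_lt hp12).trans_le hk
    have hdom : edgeLe n (k, j) (i, j) := ⟨hik.le, le_rfl⟩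
    refine ⟨hS.2 _ hkj (i, j) (hik.trans (hS.1 _ hkj)) hdom, ?_⟩
    exact (linearIndex_lt_of_edgeLe hdom fun e => hik.ne (congrArg Prod.fst e)).trans_le hle
  refine ⟨v - w - w * v, ?_, ?_⟩
  · have e : v - w - w * v = (v - v p.1 p.2 • single p.1 p.2 1) -
        (w - w p.1 p.2 • single p.1 p.2 1) - w * v := by
      rw [hwp]; abel
    rw [e]
    exact sub_mem (sub_mem (utOf_mono hrest (sub_smul_single_mem_utOf_diff hv p))
      (utOf_mono hcone (sub_smul_single_mem_utOf_diff hw p))) (mul_mem_utOf hwv hw hv)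
  · calc 1 + v = 1 + v - w * w - w * w * v := by rw [hww]; simp
      _ = (1 + w) * (1 + (v - w - w * v)) := by noncomm_ring

theorem patternGroup_subset_of_containsRootAt {D : Set (Matrix (Fin n) (Fin n) F)}
    (hS : IsUpperSetE n S) (hD1 : 1 ∈ D) (hDmul : ∀ a ∈ D, ∀ b ∈ D, a * b ∈ D)
    (hD : ∀ p ∈ S, ContainsRootAt D p) : patternGroup S ⊆ D := by
  suffices key : ∀ K, ∀ v ∈ utOf n F (S ∩ {q | linearIndex q < K}), 1 + v ∈ D by
    rintro _ ⟨v, hv, rfl⟩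
    refine key (n * n) v (utOf_mono ?_ hv)
    exact fun q hq => ⟨hq, linearIndex_lt q⟩
  intro K
  induction K with
  | zero =>
    intro v hv
    rw [show S ∩ {q | linearIndex q < 0} = ∅ by simp, utOf_empty_eq_bot,
      Submodule.mem_bot] at hv
    simpa [hv] using hD1
  | succ K ih =>
    intro v hv
    by_cases hK : ∃ p ∈ S, linearIndex p = K
    · obtain ⟨p, hp, rfl⟩ := hK
      obtain ⟨w, hw, hwp, hwD⟩ := hD p hp (v p.1 p.2)
      have hv : v ∈ utOf n F (S ∩ {q | linearIndex q ≤ linearIndex p}) := by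
        refine utOf_mono ?_ hv
        exact fun q hq => ⟨hq.1, Nat.lt_succ_iff.1 hq.2⟩
      obtain ⟨v', hv', hvw⟩ := exists_one_add_eq_one_add_mul_one_add hS hp hv hw hwp
      rw [hvw]
      exact hDmul _ hwD _ (ih v' hv')
    · refine ih v (utOf_mono ?_ hv)
      exact fun q ⟨hq, hlt⟩ =>
        ⟨hq, lt_of_le_of_ne (Nat.lt_succ_iff.1 hlt) fun e => hK ⟨q, hq, e⟩⟩

end Elimination

section RootElements

variable {N X : Set (Matrix (Fin n) (Fin n) F)} {p q : Fin n}

theorem mul_single_mul_apply (h' h : Matrix (Fin n) (Fin n) F) (p q : Fin n) (t : F)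
    (x y : Fin n) : (h' * single p q t * h) x y = h' x p * t * h q y := by
  rw [mul_apply, Finset.sum_eq_single q]
  · rw [mul_single_apply_same]
  · intro k _ hk
    rw [mul_single_apply_of_ne _ _ _ _ _ hk, zero_mul]
  · simp

theorem conj_single_sub_mul_self (hpq : p ≠ q) (t : F) {h h' : Matrix (Fin n) (Fin n) F}
    (hhh' : h * h' = 1) (hqp : h q p = 0) (h'qp : h' q p = 0) :
    (h' * single p q t * h - single p q t) * (h' * single p q t * h - single p q t) = 0 := by
  set E := single p q t
  have hEE : E * E = 0 := single_mul_single_of_ne _ _ _ _ hpq.symm _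
  have hEhE : E * h * E = 0 := by simp [E, hqp]
  have hEh'E : E * h' * E = 0 := by simp [E, h'qp]
  calc (h' * E * h - E) * (h' * E * h - E)
      = h' * (E * (h * h') * E) * h - h' * (E * h * E) - E * h' * E * h + E * E := by
        noncomm_ring
    _ = 0 := by rw [hhh', mul_one, hEE, hEhE, hEh'E]; simp

theorem one_add_conj_single_sub_mem_commSet (hpq : p < q) (t : F)
    {h h' : Matrix (Fin n) (Fin n) F} (hX : h ∈ X) (hhh' : h * h' = 1) (hh'h : h' * h = 1)
    (hqp : h' q p = 0) :
    1 + (h' * single p q t * h - single p q t) ∈ commSet (UTset n F) X := by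
  set E := single p q t
  have hEE : E * E = 0 := single_mul_single_of_ne _ _ _ _ hpq.ne' _
  have hEh'E : E * h' * E = 0 := by simp [E, hqp]
  have hE : 1 + E ∈ UTset n F := by
    rw [UTset_eq_patternGroup_edges, mem_patternGroup_iff, add_sub_cancel_left]
    exact single_mem_utOf hpq t
  refine ⟨1 + E, hE, h, hX, 1 - E, h', ?_, ?_, hhh', hh'h, ?_⟩
  · calc (1 + E) * (1 - E) = 1 - E * E := by noncomm_ring
      _ = 1 := by rw [hEE, sub_zero]
  · calc (1 - E) * (1 + E) = 1 - E * E := by noncomm_ring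
      _ = 1 := by rw [hEE, sub_zero]
  · calc 1 + (h' * E * h - E) = h' * h + h' * E * h - E * (h' * h) - E * h' * E * h := by
          rw [hh'h, hEh'E]; noncomm_ring
      _ = (1 - E) * h' * (1 + E) * h := by noncomm_ring

theorem one_add_single_mul_sub_mem_commSet_commSet {m : Matrix (Fin n) (Fin n) F}
    (hm : 1 + m ∈ commSet (UTset n F) N) (hmm : m * m = 0) (hpq : p < q) (hqp : m q p = 0)
    (u : F) :
    1 + (single p q u * m - m * single p q u - m * single p q u * m) ∈
      commSet (UTset n F) (commSet (UTset n F) N) := by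
  have hinv : (1 + m) * (1 - m) = 1 ∧ (1 - m) * (1 + m) = 1 := by
    constructor <;>
    · calc _ = 1 - m * m := by noncomm_ring
        _ = 1 := by rw [hmm, sub_zero]
  have h := one_add_conj_single_sub_mem_commSet hpq u hm hinv.1 hinv.2
    (by simp [Matrix.sub_apply, one_apply_ne hpq.ne', hqp])
  convert h using 2
  noncomm_ring

theorem containsRootAt_of_column {m : Matrix (Fin n) (Fin n) F}
    (hm : 1 + m ∈ commSet (UTset n F) N) (hmm : m * m = 0) {r s c : Fin n} (hcs : c < s)
    (hrow : ∀ y, m s y = 0) (hcol : ∀ x, r < x → m x c = 0) (hrc : m r c ≠ 0) :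
    ContainsRootAt (commSet (UTset n F) (commSet (UTset n F) N)) (r, s) := by
  intro t
  set u := -t / m r c
  have hEm : single c s u * m = 0 := by
    ext x y
    by_cases hx : x = c
    · subst hx; simp [hrow]
    · simp [hx]
  refine ⟨-(m * single c s u), ?_, ?_, ?_⟩
  · rw [mem_utOf_iff]
    intro x y hxy
    by_cases hy : y = s
    · subst hy
      have hrx : r < x := not_le.1 fun h => hxy ⟨h, le_rfl⟩
      simp [hcol x hrx]
    · simp [hy]
  · simp only [Matrix.neg_apply, mul_single_apply_same, u]
    field_simp
  · simpa [hEm, mul_assoc] using one_add_single_mul_sub_mem_commSet_commSet hm hmm hcs (hrow c) u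

theorem containsRootAt_of_row {m : Matrix (Fin n) (Fin n) F}
    (hm : 1 + m ∈ commSet (UTset n F) N) (hmm : m * m = 0) {r s c : Fin n} (hrc : r < c)
    (hcol : ∀ x, m x r = 0) (hrow : ∀ y, y < s → m c y = 0) (hcs : m c s ≠ 0) :
    ContainsRootAt (commSet (UTset n F) (commSet (UTset n F) N)) (r, s) := by
  intro t
  set u := t / m c s
  have hmE : m * single r c u = 0 := by
    ext x y
    by_cases hy : y = c
    · subst hy; simp [hcol]
    · simp [hy]
  refine ⟨single r c u * m, ?_, ?_, ?_⟩
  · rw [mem_utOf_iff]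
    intro x y hxy
    by_cases hx : x = r
    · subst hx
      have hys : y < s := not_le.1 fun h => hxy ⟨le_rfl, h⟩
      simp [hrow y hys]
    · simp [hx]
  · simp only [single_mul_apply_same, u]
    field_simp
  · simpa [hmE] using one_add_single_mul_sub_mem_commSet_commSet hm hmm hrc (hcol c) u

end RootElements

section Cases

variable {N : Set (Matrix (Fin n) (Fin n) F)} {a a' : Matrix (Fin n) (Fin n) F}

theorem containsRootAt_of_lt_of_lt (hN : N ⊆ UTset n F) (ha : a ∈ N) (haa' : a * a' = 1)
    (ha'a : a' * a = 1) {r i j s : Fin n} (hri : r < i) (hij : i < j) (hjs : j < s)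
    (haij : a i j ≠ 0) :
    ContainsRootAt (commSet (UTset n F) (commSet (UTset n F) N)) (r, s) := by
  have haUT := hN ha
  have ha'UT := mem_UTset_of_mul_eq_one haUT ha'a
  have hrs : r < s := hri.trans (hij.trans hjs)
  refine containsRootAt_of_column
    (one_add_conj_single_sub_mem_commSet hri 1 ha haa' ha'a (ha'UT.1 i r hri))
    (conj_single_sub_mul_self hri.ne 1 haa' (haUT.1 i r hri) (ha'UT.1 i r hri)) hjs
    (fun y => ?_) (fun x hx => ?_) ?_
  · simp [mul_single_mul_apply, ha'UT.1 s r hrs, hrs.ne]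
  · simp [mul_single_mul_apply, ha'UT.1 x r hx, hij.ne]
  · simp [mul_single_mul_apply, ha'UT.2 r, hij.ne, haij]

theorem containsRootAt_of_fst_eq (hN : N ⊆ UTset n F) (ha : a ∈ N) (ha' : a' ∈ N)
    (haa' : a * a' = 1) (ha'a : a' * a = 1) {i j s : Fin n}
    (hij : (i, j) ∈ minimalsE n (suppOf n F N)) (hjs : (j : ℕ) + 1 < s) (haij : a i j ≠ 0) :
    ContainsRootAt (commSet (UTset n F) (commSet (UTset n F) N)) (i, s) := by
  have haUT := hN ha
  have ha'UT := hN ha'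
  set c : Fin n := ⟨j + 1, by omega⟩
  have hjc : j < c := Fin.lt_def.2 (Nat.lt_succ_self _)
  have hcs : c < s := Fin.lt_def.2 hjs
  have hi : i ≠ j := (hij.1.1).ne
  -- Commuting with `a'` rather than `a` exposes column `j` of `a`, where minimality applies.
  refine containsRootAt_of_column
    (one_add_conj_single_sub_mem_commSet hjc 1 ha' ha'a haa' (haUT.1 c j hjc))
    (conj_single_sub_mul_self hjc.ne 1 ha'a (ha'UT.1 c j hjc) (haUT.1 c j hjc)) hcs
    (fun y => ?_) (fun x hx => ?_) ?_
  · simp [mul_single_mul_apply, haUT.1 s j (hjc.trans hcs), (hjc.trans hcs).ne]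
  · have h := sub_one_apply_eq_zero_of_mem_minimalsE hN ha hij (x := x) (y := j)
      ⟨hx.le, le_rfl⟩ fun e => hx.ne' (congrArg Prod.fst e)
    by_cases hxj : x = j
    · subst hxj; simp [mul_single_mul_apply, haUT.2, ha'UT.2]
    · simpa [mul_single_mul_apply, ha'UT.2, Matrix.sub_apply, one_apply, hxj, Ne.symm hxj] using h
  · simp [mul_single_mul_apply, ha'UT.2, hi.symm, haij]

theorem containsRootAt_of_snd_eq (hN : N ⊆ UTset n F) (ha : a ∈ N)
    (haa' : a * a' = 1) (ha'a : a' * a = 1) {r i j : Fin n}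
    (hij : (i, j) ∈ minimalsE n (suppOf n F N)) (hri : (r : ℕ) + 1 < i) (haij : a i j ≠ 0) :
    ContainsRootAt (commSet (UTset n F) (commSet (UTset n F) N)) (r, j) := by
  have haUT := hN ha
  have ha'UT := mem_UTset_of_mul_eq_one haUT ha'a
  set c : Fin n := ⟨r + 1, by omega⟩
  have hrc : r < c := Fin.lt_def.2 (Nat.lt_succ_self _)
  have hci : c < i := Fin.lt_def.2 hri
  have hi : i ≠ j := (hij.1.1).ne
  refine containsRootAt_of_row
    (one_add_conj_single_sub_mem_commSet hci 1 ha haa' ha'a (ha'UT.1 i c hci))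
    (conj_single_sub_mul_self hci.ne 1 haa' (haUT.1 i c hci) (ha'UT.1 i c hci)) hrc
    (fun x => ?_) (fun y hy => ?_) ?_
  · simp [mul_single_mul_apply, haUT.1 i r (hrc.trans hci), (hrc.trans hci).ne']
  · have h := sub_one_apply_eq_zero_of_mem_minimalsE hN ha hij (x := i) (y := y)
      ⟨le_rfl, hy.le⟩ fun e => hy.ne (congrArg Prod.snd e)
    by_cases hiy : i = y
    · subst hiy; simp [mul_single_mul_apply, haUT.2, ha'UT.2]
    · simpa [mul_single_mul_apply, ha'UT.2, Matrix.sub_apply, one_apply, hiy, Ne.symm hiy] using h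
  · simp [mul_single_mul_apply, ha'UT.2, hi, haij]

theorem containsRootAt_of_mem_upNum_two (hN : N ⊆ UTset n F)
    (hNinv : ∀ a ∈ N, ∃ b ∈ N, a * b = 1 ∧ b * a = 1) {p : Fin n × Fin n}
    (hp : p ∈ upNum n (minimalsE n (suppOf n F N)) 2) :
    ContainsRootAt (commSet (UTset n F) (commSet (UTset n F) N)) p := by
  obtain ⟨r, s⟩ := p
  obtain ⟨-, ⟨i, j⟩, hij, ⟨hri, hjs⟩, hh⟩ := hp
  obtain ⟨hij', a, ha, haij⟩ := hij.1
  obtain ⟨a', ha', haa', ha'a⟩ := hNinv a ha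
  simp only at hri hjs hh hij' haij
  rcases hri.lt_or_eq with hri | rfl
  · rcases hjs.lt_or_eq with hjs | rfl
    · exact containsRootAt_of_lt_of_lt hN ha haa' ha'a hri hij' hjs haij
    · exact containsRootAt_of_snd_eq hN ha haa' ha'a hij (by omega) haij
  · exact containsRootAt_of_fst_eq hN ha ha' haa' ha'a hij (by rw [Fin.lt_def] at hij'; omega) haij

end Cases

theorem double_commutator_eq_upNum_two_general (n : ℕ) (F : Type*) [Field F]
    (N : Set (Matrix (Fin n) (Fin n) F)) (hN : IsNormalSubgroupUT n F N) :
    commClosure (UTset n F) (commClosure (UTset n F) N) =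
      (fun a => 1 + a) ''
        (utOf n F (upNum n (minimalsE n (suppOf n F N)) 2) :
          Set (Matrix (Fin n) (Fin n) F)) := by
  refine Set.Subset.antisymm ?_ ?_
  · exact commClosure_subset_patternGroup_upNum_succ
      (commClosure_subset_patternGroup_upNum_succ (subset_patternGroup_upNum_zero hN.1))
  · refine patternGroup_subset_of_containsRootAt isUpperSetE_upNum one_mem_commClosure
      (fun _ ha _ hb => mul_mem_commClosure ha hb) fun p hp => ?_
    exact (containsRootAt_of_mem_upNum_two hN.1 hN.2.2.2.1 hp).mono
      commSet_commSet_subset_commClosure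

/-- For a normal subgroup `N ⊴ UT_n(F_q)` with `supp(N) = ↑λ`,
`[UT_n, [UT_n, N]] = UT_{↑²λ} = 1 + ut_{↑²λ}`. -/
theorem double_commutator_eq_upNum_two (n : ℕ) (F : Type*) [Field F] [Fintype F]
    (N : Set (Matrix (Fin n) (Fin n) F)) (hN : IsNormalSubgroupUT n F N) :
    commClosure (UTset n F) (commClosure (UTset n F) N) =
      (fun a => 1 + a) ''
        (utOf n F (upNum n (minimalsE n (suppOf n F N)) 2) :
          Set (Matrix (Fin n) (Fin n) F)) :=
  double_commutator_eq_upNum_two_general n F N hN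

end Paper
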